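/- arXiv:2601.18789 — 4 statements merged into one kernel-verified Lean document; each statement's English description precedes it below -/
import Mathlib

section
/- Let k ≥ 2 and let q_1, …, q_k ∈ R^{k−1} be unit vectors with ⟨q_i, q_j⟩ = −1/(k−1) for all i ≠ j. If real numbers b_1, …, b_k satisfy Σ_{i=1}^k b_i = 0 and ‖Σ_{i=1}^k b_i q_i‖ ≤ C for some real C ≥ 0, then Σ_{i=1}^k |b_i| ≤ √(k−1) · C. -/
/-!
For unit vectors `qᵢ` with pairwise inner products `c`, expanding the Gram matrix
gives `‖∑ bᵢ qᵢ‖² = (1 - c) ∑ bᵢ² + c (∑ bᵢ)²`. For a balanced `b` and `c = -1/(k-1)` this is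
`k/(k-1) ∑ bᵢ²`, and Cauchy–Schwarz `(∑ |bᵢ|)² ≤ k ∑ bᵢ²` turns it into
`(∑ |bᵢ|)² ≤ (k-1) ‖∑ bᵢ qᵢ‖²`.
-/

open scoped RealInnerProductSpace

section Equiangular

variable {ι E : Type*} [Fintype ι] [NormedAddCommGroup E] [InnerProductSpace ℝ E]
  {q : ι → E} {c : ℝ}

theorem inner_sum_smul_of_equiangular (hq : ∀ i, ‖q i‖ = 1)
    (hq' : ∀ i j, i ≠ j → ⟪q i, q j⟫ = c) (b : ι → ℝ) (i : ι) :
    ⟪q i, ∑ j, b j • q j⟫ = (1 - c) * b i + c * ∑ j, b j := by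
  classical
  have hgram : ∀ j, ⟪q i, q j⟫ = (1 - c) * (if i = j then 1 else 0) + c := by
    intro j
    by_cases hij : i = j
    · subst hij
      simp [hq]
    · simp [hij, hq' i j hij]
  simp only [inner_sum, real_inner_smul_right, hgram, mul_add, Finset.sum_add_distrib,
    mul_ite, mul_one, mul_zero, Finset.sum_ite_eq, Finset.mem_univ, if_true, ← Finset.sum_mul]
  ring

theorem norm_sum_smul_sq_of_equiangular (hq : ∀ i, ‖q i‖ = 1)
    (hq' : ∀ i j, i ≠ j → ⟪q i, q j⟫ = c) (b : ι → ℝ) :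
    ‖∑ i, b i • q i‖ ^ 2 = (1 - c) * ∑ i, b i ^ 2 + c * (∑ i, b i) ^ 2 := by
  rw [← real_inner_self_eq_norm_sq, sum_inner]
  simp only [real_inner_smul_left, inner_sum_smul_of_equiangular hq hq' b]
  calc ∑ i, b i * ((1 - c) * b i + c * ∑ j, b j)
      = ∑ i, ((1 - c) * b i ^ 2 + (c * ∑ j, b j) * b i) := by
        congr 1 with i
        ring
    _ = (1 - c) * ∑ i, b i ^ 2 + c * (∑ i, b i) ^ 2 := by
        rw [Finset.sum_add_distrib, ← Finset.mul_sum, ← Finset.mul_sum]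
        ring

end Equiangular

theorem simplex_balance_bound_general (k : ℕ) (hk : 2 ≤ k)
    (q : Fin k → EuclideanSpace ℝ (Fin (k - 1)))
    (hq : ∀ i, ‖q i‖ = 1)
    (hq' : ∀ i j, i ≠ j → ⟪q i, q j⟫ = -1 / ((k : ℝ) - 1))
    (b : Fin k → ℝ) (hb : ∑ i, b i = 0)
    (C : ℝ) (hbd : ‖∑ i, b i • q i‖ ≤ C) :
    ∑ i, |b i| ≤ Real.sqrt ((k : ℝ) - 1) * C := by
  have hk1 : (1 : ℝ) < k := by exact_mod_cast hk
  have hk_sub : (k : ℝ) - 1 ≠ 0 := by linarith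
  have hnorm : ((k : ℝ) - 1) * ‖∑ i, b i • q i‖ ^ 2 = k * ∑ i, b i ^ 2 := by
    rw [norm_sum_smul_sq_of_equiangular hq hq' b, hb]
    field_simp
    ring
  have hcs : (∑ i, |b i|) ^ 2 ≤ k * ∑ i, b i ^ 2 := by
    simpa [sq_abs] using sq_sum_le_card_mul_sum_sq (s := Finset.univ) (f := fun i => |b i|)
  calc ∑ i, |b i| ≤ Real.sqrt (((k : ℝ) - 1) * ‖∑ i, b i • q i‖ ^ 2) :=
        Real.le_sqrt_of_sq_le (hnorm ▸ hcs)
    _ = Real.sqrt ((k : ℝ) - 1) * ‖∑ i, b i • q i‖ := by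
        rw [Real.sqrt_mul (by linarith), Real.sqrt_sq (norm_nonneg _)]
    _ ≤ Real.sqrt ((k : ℝ) - 1) * C := by gcongr

theorem simplex_balance_bound (k : ℕ) (hk : 2 ≤ k)
    (q : Fin k → EuclideanSpace ℝ (Fin (k - 1)))
    (hq : ∀ i, ‖q i‖ = 1)
    (hq' : ∀ i j, i ≠ j → ⟪q i, q j⟫ = -1 / ((k : ℝ) - 1))
    (b : Fin k → ℝ) (hb : ∑ i, b i = 0)
    (C : ℝ) (hC : 0 ≤ C) (hbd : ‖∑ i, b i • q i‖ ≤ C) :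
    ∑ i, |b i| ≤ Real.sqrt ((k : ℝ) - 1) * C :=
  simplex_balance_bound_general k hk q hq hq' b hb C hbd
end

section
/- Let k, r ≥ 2 and let s_1, …, s_k be distinct unit vectors in R^d (d ≥ 1) whose linear span is all of R^d. Then there exists a constant β₁ > 0, depending only on {s_1,…,s_k} and r, such that for every nonzero w ∈ R^d and every θ with 0 < sin θ < β₁, the linear span of {g(x) : x ∈ W_θ} is a proper subspace of R^d (i.e. W_θ has codimension at least 1). -/
attribute [local instance] Classical.propDecidable

open scoped RealInnerProductSpace

/-- The defining condition of the space `X` of swaps: `x ∈ ℤ^k` with all `|x i| ≤ 2r-2`,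
`∑ x i = 0` and `∑ |x i| ≤ 4r-4`. -/
def SwapCond (k r : ℕ) (x : Fin k → ℤ) : Prop :=
  (∀ i, |x i| ≤ 2 * (r : ℤ) - 2) ∧ (∑ i, x i = 0) ∧ (∑ i, |x i| ≤ 4 * (r : ℤ) - 4)

/-- `g x = ∑ i, x i • s i`. -/
noncomputable def gMap {k d : ℕ} (s : Fin k → EuclideanSpace ℝ (Fin d))
    (x : Fin k → ℤ) : EuclideanSpace ℝ (Fin d) :=
  ∑ i, (x i : ℝ) • s i

/-- The sine of the angle `θ(x)` between `g x` and the hyperplane `w^⊥`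
(`0` by convention when `g x = 0`, matching division-by-zero conventions). -/
noncomputable def sinAngle {k d : ℕ} (s : Fin k → EuclideanSpace ℝ (Fin d))
    (w : EuclideanSpace ℝ (Fin d)) (x : Fin k → ℤ) : ℝ :=
  |⟪gMap s x, w⟫| / (‖gMap s x‖ * ‖w‖)

/-- The constant `β₀ = L / min {‖g x‖ : x ∈ X, g x ≠ 0}`, with `L = 8(r-1)²`. -/
noncomputable def beta0 (k r : ℕ) {d : ℕ} (s : Fin k → EuclideanSpace ℝ (Fin d)) : ℝ :=
  8 * ((r : ℝ) - 1) ^ 2 /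
    sInf {t : ℝ | ∃ x, SwapCond k r x ∧ gMap s x ≠ 0 ∧ t = ‖gMap s x‖}

/-!
Only finitely many vectors `g x` occur, so only finitely many subsets `T` of them span `ℝ^d`.
For a spanning `T` the map `w ↦ (⟪v, w⟫)_{v ∈ T}` is injective, hence
`c ‖w‖ ≤ ∑ v ∈ T, |⟪v, w⟫|` for some `c > 0`; thus the vectors of `T` cannot all make an angle
with `w^⊥` of sine at most `t` once `t ∑ v ∈ T, ‖v‖ < c`. For `β₁` take any positive number
below these finitely many thresholds.
-/

open Filter Topology Set

section InnerProductSpace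

variable {E : Type*} [NormedAddCommGroup E] [InnerProductSpace ℝ E]

theorem abs_inner_le_mul_of_div_lt {u w : E} {t : ℝ} (h : |⟪u, w⟫| / (‖u‖ * ‖w‖) < t) :
    |⟪u, w⟫| ≤ t * (‖u‖ * ‖w‖) := by
  rcases (mul_nonneg (norm_nonneg u) (norm_nonneg w)).eq_or_lt with h0 | hpos
  · simpa [← h0] using abs_real_inner_le_norm u w
  · exact ((div_lt_iff₀ hpos).1 h).le

variable [FiniteDimensional ℝ E]

theorem exists_pos_mul_norm_le_sum_abs_inner {ι : Type*} [Fintype ι] {b : ι → E}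
    (hb : Submodule.span ℝ (range b) = ⊤) : ∃ c > 0, ∀ w, c * ‖w‖ ≤ ∑ i, |⟪b i, w⟫| := by
  let f : E →ₗ[ℝ] ι → ℝ := LinearMap.pi fun i => innerₗ E (b i)
  have hker : LinearMap.ker f = ⊥ := by
    refine (Submodule.eq_bot_iff _).2 fun w hw => ?_
    have hle : Submodule.span ℝ (range b) ≤ LinearMap.ker (innerₗ E w) :=
      Submodule.span_le.2 <| range_subset_iff.2 fun i => by
        simpa [f, real_inner_comm] using congr_fun hw i
    exact inner_self_eq_zero.1 <| (hb ▸ hle) (Submodule.mem_top (x := w))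
  obtain ⟨K, hK, hf⟩ := f.exists_antilipschitzWith hker
  refine ⟨(K : ℝ)⁻¹, by positivity, fun w => ?_⟩
  calc (K : ℝ)⁻¹ * ‖w‖ ≤ ‖f w‖ :=
        (inv_mul_le_iff₀ (by positivity)).2 (ZeroHomClass.bound_of_antilipschitz f hf w)
    _ ≤ ∑ i, |⟪b i, w⟫| :=
        (pi_norm_le_iff_of_nonneg (by positivity)).2 fun i =>
          Finset.single_le_sum (f := fun i => |⟪b i, w⟫|) (fun _ _ => abs_nonneg _)
            (Finset.mem_univ i)

theorem eventually_eq_zero_of_forall_abs_inner_le {T : Finset E}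
    (hT : Submodule.span ℝ (T : Set E) = ⊤) :
    ∀ᶠ β in 𝓝[>] (0 : ℝ), ∀ w t, 0 ≤ t → t < β →
      (∀ v ∈ T, |⟪v, w⟫| ≤ t * (‖v‖ * ‖w‖)) → w = 0 := by
  obtain ⟨c, hc, hcT⟩ := exists_pos_mul_norm_le_sum_abs_inner (b := ((↑) : T → E))
    (by rwa [Subtype.range_coe_subtype])
  set M := ∑ v ∈ T, ‖v‖
  have hM : 0 ≤ M := Finset.sum_nonneg fun v _ => norm_nonneg v
  filter_upwards [Ioo_mem_nhdsGT (div_pos hc (by linarith : 0 < M + 1))] with β hβ w t ht htβ hw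
  have hlower : c * ‖w‖ ≤ t * M * ‖w‖ :=
    calc c * ‖w‖ ≤ ∑ v ∈ T, |⟪v, w⟫| :=
          (hcT w).trans_eq (Finset.sum_coe_sort T fun v => |⟪v, w⟫|)
      _ ≤ ∑ v ∈ T, t * (‖v‖ * ‖w‖) := Finset.sum_le_sum hw
      _ = t * M * ‖w‖ := by rw [Finset.mul_sum, Finset.sum_mul]; simp only [mul_assoc]
  have htM : t * M < c :=
    calc t * M ≤ t * (M + 1) := by nlinarith
      _ < c := (lt_div_iff₀ (by linarith)).1 (htβ.trans hβ.2)
  exact norm_le_zero_iff.1 (by nlinarith [norm_nonneg w])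

theorem exists_pos_span_filter_abs_inner_le_ne_top (G : Finset E) :
    ∃ β > 0, ∀ w ≠ 0, ∀ t, 0 ≤ t → t < β →
      Submodule.span ℝ (G.filter fun v => |⟪v, w⟫| ≤ t * (‖v‖ * ‖w‖) : Set E) ≠ ⊤ := by
  let spanning := G.powerset.filter fun T : Finset E => Submodule.span ℝ (T : Set E) = ⊤
  have hev : ∀ᶠ β in 𝓝[>] (0 : ℝ), 0 < β ∧ ∀ T ∈ spanning, ∀ w t, 0 ≤ t → t < β →
      (∀ v ∈ T, |⟪v, w⟫| ≤ t * (‖v‖ * ‖w‖)) → w = 0 :=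
    eventually_mem_nhdsWithin.and <| (eventually_all_finset _).2 fun T hT =>
      eventually_eq_zero_of_forall_abs_inner_le (Finset.mem_filter.1 hT).2
  obtain ⟨β, hβ, hall⟩ := hev.exists
  refine ⟨β, hβ, fun w hw t ht htβ hspan => hw ?_⟩
  have hmem : G.filter (fun v => |⟪v, w⟫| ≤ t * (‖v‖ * ‖w‖)) ∈ spanning :=
    Finset.mem_filter.2 ⟨Finset.mem_powerset.2 (Finset.filter_subset _ _), hspan⟩
  exact hall _ hmem w t ht htβ fun v hv => (Finset.mem_filter.1 hv).2

end InnerProductSpace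

theorem finite_setOf_swapCond (k r : ℕ) : {x : Fin k → ℤ | SwapCond k r x}.Finite :=
  (Set.Finite.pi' fun _ => Set.finite_Icc (-(2 * (r : ℤ) - 2)) (2 * r - 2)).subset
    fun _ hx i => abs_le.1 (hx.1 i)

theorem W_theta_proper_subspace_general (k r d : ℕ)
    (s : Fin k → EuclideanSpace ℝ (Fin d)) :
    ∃ β₁ : ℝ, 0 < β₁ ∧
      ∀ w : EuclideanSpace ℝ (Fin d), w ≠ 0 →
        ∀ θ : ℝ, 0 < θ → θ ≤ Real.pi / 2 → Real.sin θ < β₁ →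
          Submodule.span ℝ
            {v : EuclideanSpace ℝ (Fin d) |
              ∃ x, SwapCond k r x ∧ sinAngle s w x < Real.sin θ ∧ v = gMap s x} ≠ ⊤ := by
  obtain ⟨β, hβ, hG⟩ := exists_pos_span_filter_abs_inner_le_ne_top
    ((finite_setOf_swapCond k r).image (gMap s)).toFinset
  refine ⟨β, hβ, fun w hw θ hθ hθπ hθβ => ?_⟩
  have hsin : 0 ≤ Real.sin θ :=
    Real.sin_nonneg_of_nonneg_of_le_pi hθ.le (by linarith [Real.pi_pos])
  refine ne_top_of_le_ne_top (hG w hw _ hsin hθβ) (Submodule.span_mono ?_)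
  rintro _ ⟨x, hx, hangle, rfl⟩
  simp only [Finset.coe_filter, Set.Finite.mem_toFinset]
  exact ⟨⟨x, hx, rfl⟩, abs_inner_le_mul_of_div_lt hangle⟩

theorem W_theta_proper_subspace (k r d : ℕ) (hk : 2 ≤ k) (hr : 2 ≤ r) (hd : 1 ≤ d)
    (s : Fin k → EuclideanSpace ℝ (Fin d)) (hs : ∀ i, ‖s i‖ = 1)
    (hinj : Function.Injective s)
    (hspan : Submodule.span ℝ (Set.range s) = ⊤) :
    ∃ β₁ : ℝ, 0 < β₁ ∧
      ∀ w : EuclideanSpace ℝ (Fin d), w ≠ 0 →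
        ∀ θ : ℝ, 0 < θ → θ ≤ Real.pi / 2 → Real.sin θ < β₁ →
          Submodule.span ℝ
            {v : EuclideanSpace ℝ (Fin d) |
              ∃ x, SwapCond k r x ∧ sinAngle s w x < Real.sin θ ∧ v = gMap s x} ≠ ⊤ :=
  W_theta_proper_subspace_general k r d s
end

section
/- Let d, r ≥ 2, k = d+1, and let s_1, …, s_{d+1} ∈ R^d be the vertices of a regular simplex inscribed in the unit sphere (unit vectors with ⟨s_i, s_j⟩ = −1/d for i ≠ j). Then min{‖g(x)‖ : x ∈ X, g(x) ≠ 0} = √(2 + 2/d), and consequently one may take β₀ = L = 8(r−1)²: for every nonzero w ∈ R^d and every θ ∈ (0, π/2] with sin θ ≥ L/‖w‖, every x ∈ X with |⟨g(x), w⟩| ≤ L satisfies sin θ(x) ≤ sin θ. -/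
attribute [local instance] Classical.propDecidable

open scoped RealInnerProductSpace

/-- Norm-squared formula for `gMap` over a regular simplex, when `∑ x i = 0`. -/
lemma normsq_gMap {d : ℕ} (hd : 0 < d) (s : Fin (d+1) → EuclideanSpace ℝ (Fin d))
    (hs : ∀ i, ‖s i‖ = 1) (hs' : ∀ i j, i ≠ j → ⟪s i, s j⟫ = -1/(d:ℝ))
    (x : Fin (d+1) → ℤ) (hx : ∑ i, x i = 0) :
    ‖gMap s x‖^2 = (1 + 1/(d:ℝ)) * ∑ i, ((x i:ℝ))^2 := by
  have hd' : (d:ℝ) ≠ 0 := Nat.cast_ne_zero.mpr hd.ne'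
  have key : ∀ i j, ⟪s i, s j⟫ = (if i = j then (1:ℝ)+1/d else 0) - 1/d := by
    intro i j
    by_cases h : i = j
    · subst h
      rw [real_inner_self_eq_norm_sq, hs]
      simp
    · rw [hs' i j h]; simp [h]; ring
  have h0 : (∑ i, (x i:ℝ)) = 0 := by
    have := congrArg (fun z : ℤ => (z:ℝ)) hx
    push_cast at this; simpa using this
  rw [gMap, ← real_inner_self_eq_norm_sq]
  rw [inner_sum]
  simp only [sum_inner, real_inner_smul_left, real_inner_smul_right, key, mul_sub, mul_ite,
    mul_zero, Finset.sum_sub_distrib, Finset.sum_ite_eq', Finset.mem_univ, if_true]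
  have h2 : ∑ i : Fin (d+1), ∑ j : Fin (d+1), (x i:ℝ) * ((x j:ℝ) * (1/d)) = 0 := by
    simp [← Finset.mul_sum, ← Finset.sum_mul, h0]
  rw [h2, sub_zero, Finset.mul_sum]
  exact Finset.sum_congr rfl fun i _ => by ring

/-- Lower bound on the norm of a nonzero `gMap`. -/
lemma gMap_lower {d : ℕ} (hd : 0 < d) (s : Fin (d+1) → EuclideanSpace ℝ (Fin d))
    (hs : ∀ i, ‖s i‖ = 1) (hs' : ∀ i j, i ≠ j → ⟪s i, s j⟫ = -1/(d:ℝ))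
    (x : Fin (d+1) → ℤ) (hsum : ∑ i, x i = 0) (hg : gMap s x ≠ 0) :
    Real.sqrt (2 + 2/(d:ℝ)) ≤ ‖gMap s x‖ := by
  have hd' : (0:ℝ) < d := by exact_mod_cast hd
  have hnsq := normsq_gMap hd s hs hs' x hsum
  have hex : ∃ i, x i ≠ 0 := by
    by_contra h
    push_neg at h
    exact hg (by simp only [gMap]; exact Finset.sum_eq_zero fun i _ => by simp [h i])
  obtain ⟨i, hi⟩ := hex
  have hex2 : ∃ j, j ≠ i ∧ x j ≠ 0 := by
    by_contra h
    push_neg at h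
    have hsi : ∑ j, x j = x i :=
      Finset.sum_eq_single i (fun j _ hj => h j hj) (by simp)
    exact hi (by rw [← hsi, hsum])
  obtain ⟨j, hji, hj⟩ := hex2
  have hpair : (x i)^2 + (x j)^2 ≤ ∑ k, (x k)^2 := by
    have hsub := Finset.sum_le_sum_of_subset_of_nonneg
      (Finset.subset_univ ({i, j} : Finset (Fin (d+1))))
      (fun k _ _ => sq_nonneg (x k))
    rwa [Finset.sum_pair (Ne.symm hji)] at hsub
  have h1i : 1 ≤ (x i)^2 := by rcases lt_or_gt_of_ne hi with h|h <;> nlinarith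
  have h1j : 1 ≤ (x j)^2 := by rcases lt_or_gt_of_ne hj with h|h <;> nlinarith
  have h2 : (2:ℤ) ≤ ∑ k, (x k)^2 := by omega
  have h2' : (2:ℝ) ≤ ∑ k, ((x k:ℝ))^2 := by exact_mod_cast h2
  have hle : 2 + 2/(d:ℝ) ≤ ‖gMap s x‖^2 := by
    rw [hnsq]
    calc 2 + 2/(d:ℝ) = (1 + 1/(d:ℝ)) * 2 := by ring
      _ ≤ (1 + 1/(d:ℝ)) * ∑ k, ((x k:ℝ))^2 :=
          mul_le_mul_of_nonneg_left h2' (by positivity)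
  calc Real.sqrt (2 + 2/(d:ℝ)) ≤ Real.sqrt (‖gMap s x‖^2) := Real.sqrt_le_sqrt hle
    _ = ‖gMap s x‖ := Real.sqrt_sq (norm_nonneg _)

theorem simplex_beta0_explicit (d r : ℕ) (hd : 2 ≤ d) (hr : 2 ≤ r)
    (s : Fin (d + 1) → EuclideanSpace ℝ (Fin d))
    (hs : ∀ i, ‖s i‖ = 1)
    (hs' : ∀ i j, i ≠ j → ⟪s i, s j⟫ = -1 / d) :
    sInf {t : ℝ | ∃ x, SwapCond (d + 1) r x ∧ gMap s x ≠ 0 ∧ t = ‖gMap s x‖} =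
      Real.sqrt (2 + 2 / d) ∧
    ∀ w : EuclideanSpace ℝ (Fin d), w ≠ 0 →
      ∀ θ : ℝ, 0 < θ → θ ≤ Real.pi / 2 →
        8 * ((r : ℝ) - 1) ^ 2 / ‖w‖ ≤ Real.sin θ →
        ∀ x : Fin (d + 1) → ℤ, SwapCond (d + 1) r x →
          |⟪gMap s x, w⟫| ≤ 8 * ((r : ℝ) - 1) ^ 2 →
          sinAngle s w x ≤ Real.sin θ := by
  have hd1 : 0 < d := by omega
  have hd0 : d ≠ 0 := by omega
  have hdR : (0:ℝ) < d := by exact_mod_cast hd1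
  have hs'' : ∀ i j, i ≠ j → ⟪s i, s j⟫ = -1/(d:ℝ) := hs'
  constructor
  · -- the infimum computation
    apply IsLeast.csInf_eq
    constructor
    · -- membership: witness x₀ = e₀ - e₁
      have h01 : (0 : Fin (d+1)) ≠ 1 := by simp [hd0]
      set x₀ : Fin (d+1) → ℤ := fun i => if i = 0 then 1 else if i = 1 then -1 else 0 with hx₀
      have hsum : ∑ i, x₀ i = 0 := by
        have he : ∀ i, x₀ i = (if i = (0:Fin (d+1)) then 1 else 0)
            + (if i = (1:Fin (d+1)) then -1 else 0) := by
          intro i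
          by_cases h0 : i = 0
          · subst h0; simp [hx₀, (Ne.symm h01), hd0]
          · by_cases h1 : i = 1 <;> simp [hx₀, h0, h1, hd0]
        norm_num [he, Finset.sum_add_distrib, Finset.sum_ite_eq']
      have habs : ∑ i, |x₀ i| = 2 := by
        have he : ∀ i, |x₀ i| = (if i = (0:Fin (d+1)) then 1 else 0)
            + (if i = (1:Fin (d+1)) then 1 else 0) := by
          intro i
          by_cases h0 : i = 0
          · subst h0; simp [hx₀, (Ne.symm h01), hd0]
          · by_cases h1 : i = 1 <;> simp [hx₀, h0, h1, hd0]
        norm_num [he, Finset.sum_add_distrib, Finset.sum_ite_eq']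
      have hsq : ∑ i, ((x₀ i : ℝ))^2 = 2 := by
        have he : ∀ i, ((x₀ i:ℝ))^2 = (if i = (0:Fin (d+1)) then 1 else 0)
            + (if i = (1:Fin (d+1)) then 1 else 0) := by
          intro i
          by_cases h0 : i = 0
          · subst h0; simp [hx₀, (Ne.symm h01), hd0]
          · by_cases h1 : i = 1 <;> simp [hx₀, h0, h1, hd0]
        norm_num [he, Finset.sum_add_distrib, Finset.sum_ite_eq']
      have hcond : SwapCond (d+1) r x₀ := by
        refine ⟨fun i => ?_, hsum, ?_⟩
        · by_cases h0 : i = 0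
          · subst h0; simp [hx₀, hd0]; omega
          · by_cases h1 : i = 1 <;> simp [hx₀, h0, h1, hd0] <;> omega
        · rw [habs]; omega
      have hnsq : ‖gMap s x₀‖^2 = 2 + 2/(d:ℝ) := by
        rw [normsq_gMap hd1 s hs hs'' x₀ hsum, hsq]
        field_simp
      have hgne : gMap s x₀ ≠ 0 := by
        intro h
        rw [h] at hnsq
        simp at hnsq
        have : 0 < 2 + 2/(d:ℝ) := by positivity
        linarith [hnsq]
      refine ⟨x₀, hcond, hgne, ?_⟩
      rw [← hnsq, Real.sqrt_sq (norm_nonneg _)]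
    · -- lower bound
      rintro t ⟨x, hx, hg, rfl⟩
      exact gMap_lower hd1 s hs hs'' x hx.2.1 hg
  · -- the angle bound
    intro w hw θ hθ hθ2 hsin x hx hip
    have hw' : (0:ℝ) < ‖w‖ := norm_pos_iff.mpr hw
    have hL : (0:ℝ) ≤ 8 * ((r : ℝ) - 1) ^ 2 := by positivity
    by_cases hg : gMap s x = 0
    · rw [sinAngle, hg]
      simp only [inner_zero_left, abs_zero, norm_zero, zero_mul, div_zero]
      calc (0:ℝ) ≤ 8 * ((r : ℝ) - 1) ^ 2 / ‖w‖ := by positivity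
        _ ≤ Real.sin θ := hsin
    · have hg1 : (1:ℝ) ≤ ‖gMap s x‖ := by
        have h1 : (1:ℝ) ≤ Real.sqrt (2 + 2/(d:ℝ)) := by
          rw [show (1:ℝ) = Real.sqrt 1 by simp]
          apply Real.sqrt_le_sqrt
          have : 0 < 2/(d:ℝ) := by positivity
          linarith
        exact h1.trans (gMap_lower hd1 s hs hs'' x hx.2.1 hg)
      have hgpos : (0:ℝ) < ‖gMap s x‖ := lt_of_lt_of_le one_pos hg1
      rw [sinAngle]
      have step : |⟪gMap s x, w⟫| / (‖gMap s x‖ * ‖w‖) ≤ 8 * ((r : ℝ) - 1) ^ 2 / ‖w‖ := by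
        rw [div_le_div_iff₀ (by positivity) hw']
        calc |⟪gMap s x, w⟫| * ‖w‖ ≤ (8*((r:ℝ)-1)^2) * ‖w‖ :=
              mul_le_mul_of_nonneg_right hip hw'.le
          _ = (8*((r:ℝ)-1)^2) * (1 * ‖w‖) := by ring
          _ ≤ (8*((r:ℝ)-1)^2) * (‖gMap s x‖ * ‖w‖) :=
              mul_le_mul_of_nonneg_left (mul_le_mul_of_nonneg_right hg1 hw'.le) hL
      exact step.trans hsin
end

section
/- Let d, r ≥ 2, k = d+1, and let s_1, …, s_{d+1} ∈ R^d be the vertices of a regular simplex inscribed in the unit sphere (unit vectors with ⟨s_i, s_j⟩ = −1/d for i ≠ j). Then for every nonzero w ∈ R^d and every θ with 0 < sin θ < (8dr)^{−d}, the linear span of {g(x) : x ∈ W_θ} is a proper subspace of R^d; that is, in this setting one may take β₁ = (8dr)^{−d}. -/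
attribute [local instance] Classical.propDecidable

open scoped RealInnerProductSpace

/-!
If the span were everything, it would contain a basis `g(x_1), …, g(x_d)` of vectors that all
make an angle less than `θ` with the hyperplane `w^⊥`. Since the `s_i` sum to zero, each `g(x_j)`
is an integer combination of `s_1, …, s_d`, so the determinant of this basis is `det S · det N`,
where `S` has columns `s_1, …, s_d` and `N` is a nonsingular integer matrix; the Gram matrix of
`s_1, …, s_d` gives `|det S| ≥ 1/d`.
On the other hand, Cramer's rule writes `det · w` as a combination of the basis vectors with
coefficients at most `d! ‖w‖ (4r)^(d-1)`, and pairing with `w`, using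
`|⟪g(x_j), w⟫| ≤ sin θ · 4r · ‖w‖`, gives `|det| ≤ d · d! · (4r)^d · sin θ`. Together these force
`sin θ ≥ (d² d! (4r)^d)⁻¹ ≥ (8dr)^(-d)`.
-/

open Matrix Module
open scoped Nat

theorem Matrix.abs_det_le_factorial_mul_prod {n R : Type*} [Fintype n] [DecidableEq n]
    [CommRing R] [LinearOrder R] [IsStrictOrderedRing R]
    (A : Matrix n n R) (b : n → R) (h : ∀ i j, |A i j| ≤ b j) :
    |A.det| ≤ (Fintype.card n)! * ∏ j, b j := by
  rw [det_apply]
  refine (Finset.abs_sum_le_sum_abs _ _).trans ?_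
  have hterm (σ : Equiv.Perm n) : |Equiv.Perm.sign σ • ∏ i, A (σ i) i| ≤ ∏ j, b j := by
    have hsign : |((Equiv.Perm.sign σ : ℤ) : R)| = 1 := by
      rcases Int.units_eq_one_or (Equiv.Perm.sign σ) with h | h <;> simp [h]
    rw [Units.smul_def, zsmul_eq_mul, abs_mul, hsign, one_mul, Finset.abs_prod]
    exact Finset.prod_le_prod (fun _ _ ↦ abs_nonneg _) fun i _ ↦ h (σ i) i
  refine (Finset.sum_le_sum fun σ _ ↦ hterm σ).trans_eq ?_
  rw [Finset.sum_const, Finset.card_univ, Fintype.card_perm, nsmul_eq_mul]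

theorem Matrix.abs_cramer_le {n R : Type*} [Fintype n] [DecidableEq n]
    [CommRing R] [LinearOrder R] [IsStrictOrderedRing R]
    (A : Matrix n n R) (v : n → R) {a c : R} (hA : ∀ i j, |A i j| ≤ a) (hv : ∀ i, |v i| ≤ c)
    (j : n) : |A.cramer v j| ≤ (Fintype.card n)! * (c * a ^ (Fintype.card n - 1)) := by
  rw [cramer_apply]
  convert (A.updateCol j v).abs_det_le_factorial_mul_prod (Function.update (fun _ ↦ a) j c) _
    using 2
  · rw [Finset.prod_update_of_mem (Finset.mem_univ j), Finset.prod_const, Finset.card_sdiff,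
      Finset.inter_univ, Finset.card_univ, Finset.card_singleton]
  · intro i k
    rcases eq_or_ne k j with rfl | hk
    · simpa using hv i
    · simpa [hk] using hA i k

theorem Nat.factorial_le_pow_pred (n : ℕ) : n ! ≤ n ^ (n - 1) := by
  rcases n with _ | n
  · rfl
  · have h : (n + 1 - n)! * (n + 1).descFactorial n = (n + 1)! :=
      Nat.factorial_mul_descFactorial (Nat.le_succ n)
    rw [Nat.add_sub_cancel_left, Nat.factorial_one, one_mul] at h
    simpa [← h] using (n + 1).descFactorial_le_pow n

theorem Nat.sq_mul_factorial_le_two_mul_pow (n : ℕ) : n ^ 2 * n ! ≤ (2 * n) ^ n := by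
  rcases n with _ | n
  · simp
  · calc (n + 1) ^ 2 * (n + 1)! ≤ (n + 1) ^ 2 * (n + 1) ^ n :=
          Nat.mul_le_mul_left _ (Nat.factorial_le_pow_pred _)
      _ = (n + 1) * (n + 1) ^ (n + 1) := by ring
      _ ≤ 2 ^ (n + 1) * (n + 1) ^ (n + 1) := Nat.mul_le_mul_right _ Nat.lt_two_pow_self.le
      _ = (2 * (n + 1)) ^ (n + 1) := (mul_pow ..).symm

theorem one_le_two_mul_pow_mul_of_inv_le {n : ℕ} {a ε : ℝ} (hn : n ≠ 0) (ha : 0 ≤ a) (hε : 0 ≤ ε)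
    (h : (n : ℝ)⁻¹ ≤ n * n ! * a ^ n * ε) : 1 ≤ (2 * n * a) ^ n * ε := by
  have hn' : (0 : ℝ) < n := by positivity
  calc (1 : ℝ) = n * (n : ℝ)⁻¹ := (mul_inv_cancel₀ hn'.ne').symm
    _ ≤ n * (n * n ! * a ^ n * ε) := by gcongr
    _ = (n ^ 2 * n ! : ℕ) * a ^ n * ε := by push_cast; ring
    _ ≤ ((2 * n) ^ n : ℕ) * a ^ n * ε := by gcongr; exact Nat.sq_mul_factorial_le_two_mul_pow n
    _ = (2 * n * a) ^ n * ε := by push_cast; ring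

theorem exists_basis_forall_mem_of_span_eq_top {ι K V : Type*} [DivisionRing K] [AddCommGroup V]
    [Module K V] (b₀ : Basis ι K V) {s : Set V} (hs : Submodule.span K s = ⊤) :
    ∃ b : Basis ι K V, ∀ i, b i ∈ s := by
  let b := Basis.ofSpan hs.ge
  refine ⟨b.reindex (b.indexEquiv b₀), fun i ↦ ?_⟩
  rw [Basis.reindex_apply]
  exact Basis.ofSpan_subset hs.ge (Set.mem_range_self _)

theorem EuclideanSpace.abs_det_le_of_abs_inner_le {ι : Type*} [Fintype ι] [DecidableEq ι]
    (v : ι → EuclideanSpace ℝ ι) {w : EuclideanSpace ℝ ι} (hw : w ≠ 0) {R ε : ℝ} (hε : 0 ≤ ε)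
    (hv : ∀ j, ‖v j‖ ≤ R) (hvw : ∀ j, |⟪v j, w⟫| ≤ ε * ‖v j‖ * ‖w‖) :
    |(EuclideanSpace.basisFun ι ℝ).toBasis.det v|
      ≤ Fintype.card ι * (Fintype.card ι)! * R ^ Fintype.card ι * ε := by
  set n := Fintype.card ι
  set M := (EuclideanSpace.basisFun ι ℝ).toBasis.toMatrix v
  have hM (i j : ι) : M i j = v j i := rfl
  have hι : Nonempty ι := by
    by_contra h
    rw [not_nonempty_iff] at h
    exact hw (Subsingleton.elim w 0)
  have hR : 0 ≤ R := (norm_nonneg _).trans (hv (Classical.arbitrary ι))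
  set c := M.cramer w
  have hcomb : ∑ j, c j • v j = M.det • w := by
    ext i
    simpa [mulVec, dotProduct, hM, mul_comm] using congrFun (M.mulVec_cramer w) i
  have hdet : M.det * ‖w‖ ^ 2 = ∑ j, c j * ⟪v j, w⟫ := by
    rw [← real_inner_self_eq_norm_sq, ← real_inner_smul_left, ← hcomb, sum_inner]
    simp only [real_inner_smul_left]
  have hc (j : ι) : |c j| ≤ n ! * (‖w‖ * R ^ (n - 1)) :=
    M.abs_cramer_le _ (fun i j ↦ (hM i j).symm ▸ (PiLp.norm_apply_le (v j) i).trans (hv j))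
      (fun i ↦ PiLp.norm_apply_le w i) j
  have hpow : R ^ (n - 1) * R = R ^ n := pow_sub_one_mul Fintype.card_ne_zero R
  have key : |M.det| * ‖w‖ ^ 2 ≤ n * n ! * R ^ n * ε * ‖w‖ ^ 2 :=
    calc |M.det| * ‖w‖ ^ 2 = |∑ j, c j * ⟪v j, w⟫| := by
          rw [← hdet, abs_mul, abs_of_nonneg (sq_nonneg ‖w‖)]
      _ ≤ ∑ j, |c j| * |⟪v j, w⟫| := by
          simp only [← abs_mul]
          exact Finset.abs_sum_le_sum_abs _ _
      _ ≤ ∑ _j : ι, n ! * (‖w‖ * R ^ (n - 1)) * (ε * R * ‖w‖) := by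
          gcongr with j
          · exact hc j
          · exact (hvw j).trans (by gcongr; exact hv j)
      _ = n * n ! * R ^ n * ε * ‖w‖ ^ 2 := by
          rw [Finset.sum_const, Finset.card_univ, nsmul_eq_mul, ← hpow]
          ring
  rw [Module.Basis.det_apply]
  exact le_of_mul_le_mul_right key (by positivity)

theorem OrthonormalBasis.det_sq_eq_det_gram {ι E : Type*} [Fintype ι] [DecidableEq ι]
    [NormedAddCommGroup E] [InnerProductSpace ℝ E] (b : OrthonormalBasis ι ℝ E) (v : ι → E) :
    b.toBasis.det v ^ 2 = (gram ℝ v).det := by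
  rw [gram_eq_conjTranspose_mul b, det_mul, det_conjTranspose, star_trivial, ← sq,
    Module.Basis.det_apply]
  rfl

section RegularSimplex

variable {E : Type*} [NormedAddCommGroup E] [InnerProductSpace ℝ E] {n : ℕ}

theorem sum_eq_zero_of_regular_simplex {s : Fin (n + 1) → E} (hn : n ≠ 0)
    (hs : ∀ i, ‖s i‖ = 1) (hs' : ∀ i j, i ≠ j → ⟪s i, s j⟫ = -1 / n) : ∑ i, s i = 0 := by
  have hrow (i) : ∑ j, ⟪s i, s j⟫ = 0 := by
    rw [Fintype.sum_eq_add_sum_compl i, real_inner_self_eq_norm_sq, hs i,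
      Finset.sum_congr rfl fun j hj ↦ hs' i j (Ne.symm (by simpa using hj)), Finset.sum_const,
      Finset.card_compl, Finset.card_singleton, Fintype.card_fin, nsmul_eq_mul]
    field_simp
    push_cast
    ring
  rw [← inner_self_eq_zero (𝕜 := ℝ), sum_inner]
  exact Finset.sum_eq_zero fun i _ ↦ by rw [inner_sum, hrow i]

theorem det_gram_of_regular_simplex {u : Fin n → E} (hn : n ≠ 0) (hu : ∀ i, ‖u i‖ = 1)
    (hu' : ∀ i j, i ≠ j → ⟪u i, u j⟫ = -1 / n) :
    (gram ℝ u).det = ((n + 1) / n) ^ n / (n + 1) := by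
  have hn' : (n : ℝ) ≠ 0 := Nat.cast_ne_zero.mpr hn
  have hgram : gram ℝ u = ((n + 1) / n : ℝ) •
      (1 + vecMulVec (fun _ : Fin n ↦ (1 : ℝ)) (fun _ : Fin n ↦ (-1 / (n + 1) : ℝ))) := by
    ext i j
    simp only [gram_apply, Matrix.smul_apply, Matrix.add_apply, one_apply, vecMulVec_apply,
      smul_eq_mul]
    split_ifs with hij
    · rw [hij, real_inner_self_eq_norm_sq, hu]
      field_simp
      ring
    · rw [hu' i j hij]
      field_simp
      ring
  rw [hgram, det_smul, vecMulVec_eq Unit, det_one_add_replicateCol_mul_replicateRow]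
  simp only [dotProduct, Finset.sum_const, Finset.card_univ, Fintype.card_fin, nsmul_eq_mul]
  field_simp
  ring

theorem OrthonormalBasis.inv_le_abs_det_of_regular_simplex (b : OrthonormalBasis (Fin n) ℝ E)
    {u : Fin n → E} (hn : n ≠ 0) (hu : ∀ i, ‖u i‖ = 1) (hu' : ∀ i j, i ≠ j → ⟪u i, u j⟫ = -1 / n) :
    (n : ℝ)⁻¹ ≤ |b.toBasis.det u| := by
  have hn' : (1 : ℝ) ≤ n := Nat.one_le_cast.mpr (Nat.one_le_iff_ne_zero.mpr hn)
  rw [← abs_of_pos (inv_pos.mpr (zero_lt_one.trans_le hn')), ← sq_le_sq,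
    b.det_sq_eq_det_gram, det_gram_of_regular_simplex hn hu hu']
  calc (n : ℝ)⁻¹ ^ 2 ≤ (n : ℝ)⁻¹ := by
        rw [sq]
        exact mul_le_of_le_one_left (by positivity) (inv_le_one_of_one_le₀ hn')
    _ = ((n + 1) / n) / (n + 1) := by field_simp
    _ ≤ ((n + 1) / n) ^ n / (n + 1) := by
        gcongr
        exact le_self_pow₀ ((one_le_div₀ (by positivity)).mpr (by linarith)) hn

end RegularSimplex

section SwapMap

variable {k d : ℕ}

theorem gMap_eq_sum_castSucc {s : Fin (k + 1) → EuclideanSpace ℝ (Fin d)} (hs : ∑ i, s i = 0)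
    (x : Fin (k + 1) → ℤ) :
    gMap s x = ∑ j : Fin k, ((x j.castSucc - x (Fin.last k) : ℤ) : ℝ) • s j.castSucc := by
  have hshift : gMap s x = ∑ i, ((x i - x (Fin.last k) : ℤ) : ℝ) • s i := by
    simp only [Int.cast_sub, sub_smul, Finset.sum_sub_distrib, ← Finset.smul_sum, hs, smul_zero,
      sub_zero, gMap]
  simp [hshift, Fin.sum_univ_castSucc]

theorem norm_gMap_le_of_swapCond {r : ℕ} {s : Fin k → EuclideanSpace ℝ (Fin d)}
    (hs : ∀ i, ‖s i‖ = 1) {x : Fin k → ℤ} (hx : SwapCond k r x) : ‖gMap s x‖ ≤ 4 * r :=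
  calc ‖gMap s x‖ ≤ ∑ i, ‖(x i : ℝ) • s i‖ := norm_sum_le _ _
    _ = ((∑ i, |x i| : ℤ) : ℝ) := by simp [norm_smul, hs]
    _ ≤ 4 * r := by
        have : ((∑ i, |x i| : ℤ) : ℝ) ≤ 4 * r - 4 := by exact_mod_cast hx.2.2
        linarith

theorem sinAngle_nonneg (s : Fin k → EuclideanSpace ℝ (Fin d)) (w : EuclideanSpace ℝ (Fin d))
    (x : Fin k → ℤ) : 0 ≤ sinAngle s w x := by
  unfold sinAngle
  positivity

theorem abs_inner_le_of_sinAngle_le {s : Fin k → EuclideanSpace ℝ (Fin d)}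
    {w : EuclideanSpace ℝ (Fin d)} {x : Fin k → ℤ} {ε : ℝ} (hx : sinAngle s w x ≤ ε) :
    |⟪gMap s x, w⟫| ≤ ε * ‖gMap s x‖ * ‖w‖ := by
  rw [mul_assoc]
  rcases (by positivity : 0 ≤ ‖gMap s x‖ * ‖w‖).eq_or_lt with h | h
  · rw [← h, mul_zero]
    exact h ▸ abs_real_inner_le_norm _ _
  · exact (div_le_iff₀ h).mp hx

theorem inv_le_abs_det_gMap {s : Fin (d + 1) → EuclideanSpace ℝ (Fin d)} (hd : d ≠ 0)
    (hs : ∀ i, ‖s i‖ = 1) (hs' : ∀ i j, i ≠ j → ⟪s i, s j⟫ = -1 / d)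
    (X : Fin d → Fin (d + 1) → ℤ)
    (hX : (EuclideanSpace.basisFun (Fin d) ℝ).toBasis.det (fun j ↦ gMap s (X j)) ≠ 0) :
    (d : ℝ)⁻¹ ≤ |(EuclideanSpace.basisFun (Fin d) ℝ).toBasis.det (fun j ↦ gMap s (X j))| := by
  set b := EuclideanSpace.basisFun (Fin d) ℝ
  set N : Matrix (Fin d) (Fin d) ℤ := of fun k j ↦ X j k.castSucc - X j (Fin.last d)
  have hsum := sum_eq_zero_of_regular_simplex hd hs hs'
  have hfactor : b.toBasis.det (fun j ↦ gMap s (X j))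
      = b.toBasis.det (fun j ↦ s j.castSucc) * N.det := by
    rw [Basis.det_apply, Basis.det_apply, Int.cast_det, ← det_mul]
    congr 1
    ext i j
    simp [b, N, Basis.toMatrix_apply, gMap_eq_sum_castSucc hsum, mul_apply, mul_comm]
  have hN : (1 : ℝ) ≤ |(N.det : ℝ)| := by
    rw [hfactor] at hX
    exact_mod_cast Int.one_le_abs (by exact_mod_cast right_ne_zero_of_mul hX)
  have hu := b.inv_le_abs_det_of_regular_simplex hd (fun i ↦ hs _)
    (fun i j hij ↦ hs' _ _ (Fin.castSucc_injective _ |>.ne hij))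
  rw [hfactor, abs_mul]
  exact hu.trans (le_mul_of_one_le_right (abs_nonneg _) hN)

end SwapMap

theorem simplex_beta1_explicit_general (d r : ℕ)
    (s : Fin (d + 1) → EuclideanSpace ℝ (Fin d))
    (hs : ∀ i, ‖s i‖ = 1)
    (hs' : ∀ i j, i ≠ j → ⟪s i, s j⟫ = -1 / d) :
    ∀ w : EuclideanSpace ℝ (Fin d), w ≠ 0 →
      ∀ θ : ℝ, 0 < θ → θ ≤ Real.pi / 2 →
        Real.sin θ < ((8 * (d : ℝ) * r) ^ d)⁻¹ →
        Submodule.span ℝ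
          {v : EuclideanSpace ℝ (Fin d) |
            ∃ x, SwapCond (d + 1) r x ∧ sinAngle s w x < Real.sin θ ∧ v = gMap s x} ≠ ⊤ := by
  intro w hw θ _ _ hθ hspan
  have hd : d ≠ 0 := by
    rintro rfl
    exact hw (Subsingleton.elim w 0)
  set b := EuclideanSpace.basisFun (Fin d) ℝ
  obtain ⟨v, hv⟩ := exists_basis_forall_mem_of_span_eq_top b.toBasis hspan
  choose X hX hXθ hXv using hv
  have hε : 0 ≤ Real.sin θ := (sinAngle_nonneg s w _).trans (hXθ ⟨0, Nat.pos_of_ne_zero hd⟩).le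
  have hlower : (d : ℝ)⁻¹ ≤ |b.toBasis.det v| := by
    have hdet := (b.toBasis.isUnit_det v).ne_zero
    rw [show ⇑v = fun j ↦ gMap s (X j) from funext hXv] at hdet ⊢
    exact inv_le_abs_det_gMap hd hs hs' X hdet
  have hupper : |b.toBasis.det v| ≤ d * d ! * (4 * r) ^ d * Real.sin θ := by
    simpa using EuclideanSpace.abs_det_le_of_abs_inner_le v hw hε
      (fun j ↦ hXv j ▸ norm_gMap_le_of_swapCond hs (hX j))
      (fun j ↦ hXv j ▸ abs_inner_le_of_sinAngle_le (hXθ j).le)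
  have hone : 1 ≤ (8 * (d : ℝ) * r) ^ d * Real.sin θ := by
    have := one_le_two_mul_pow_mul_of_inv_le hd (by positivity) hε (hlower.trans hupper)
    rwa [show 2 * (d : ℝ) * (4 * r) = 8 * d * r by ring] at this
  have hpos : 0 < (8 * (d : ℝ) * r) ^ d := pos_of_mul_pos_left (one_pos.trans_le hone) hε
  exact hone.not_gt ((lt_inv_mul_iff₀ hpos).mp (by simpa using hθ))

theorem simplex_beta1_explicit (d r : ℕ) (hd : 2 ≤ d) (hr : 2 ≤ r)
    (s : Fin (d + 1) → EuclideanSpace ℝ (Fin d))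
    (hs : ∀ i, ‖s i‖ = 1)
    (hs' : ∀ i j, i ≠ j → ⟪s i, s j⟫ = -1 / d) :
    ∀ w : EuclideanSpace ℝ (Fin d), w ≠ 0 →
      ∀ θ : ℝ, 0 < θ → θ ≤ Real.pi / 2 →
        Real.sin θ < ((8 * (d : ℝ) * r) ^ d)⁻¹ →
        Submodule.span ℝ
          {v : EuclideanSpace ℝ (Fin d) |
            ∃ x, SwapCond (d + 1) r x ∧ sinAngle s w x < Real.sin θ ∧ v = gMap s x} ≠ ⊤ :=
  simplex_beta1_explicit_general d r s hs hs'
end
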